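/- The space P̃₃ has exactly eight path components, namely the sets P̃₃ₑ = {φ ∈ P̃₃ : e₁a₁ > 0, e₂b₂ > 0 and e₃c₃ > 0} for the eight sign vectors e = (e₁,e₂,e₃) ∈ {−1,1}³, where a₁, b₂, c₃ denote the leading coefficients of the three component polynomials. -/
import Mathlib


open Polynomial

/-- `(f, g, h)` defines a polynomial knot: the map `t ↦ (f t, g t, h t)` is injective
and its derivative never vanishes. -/
def IsPolyKnot (f g h : Polynomial ℝ) : Prop :=
  Function.Injective (fun t : ℝ => (f.eval t, g.eval t, h.eval t)) ∧
  ∀ t : ℝ, ((derivative f).eval t, (derivative g).eval t, (derivative h).eval t)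
      ≠ ((0 : ℝ), (0 : ℝ), (0 : ℝ))

/-- Inside the space `A₃ ≅ ℝ⁹` of coefficient tuples `(a₀, a₁, b₀, b₁, b₂, c₀, c₁, c₂, c₃)`,
the set `P̃₃` of tuples defining a polynomial knot `(f, g, h)` with
`deg f = 1`, `deg g = 2`, `deg h = 3`. -/
def Pt3 : Set (Fin 9 → ℝ) :=
  {x | IsPolyKnot (C (x 1) * X + C (x 0)) (C (x 4) * X ^ 2 + C (x 3) * X + C (x 2))
        (C (x 8) * X ^ 3 + C (x 7) * X ^ 2 + C (x 6) * X + C (x 5)) ∧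
    (C (x 1) * X + C (x 0)).natDegree = 1 ∧
    (C (x 4) * X ^ 2 + C (x 3) * X + C (x 2)).natDegree = 2 ∧
    (C (x 8) * X ^ 3 + C (x 7) * X ^ 2 + C (x 6) * X + C (x 5)).natDegree = 3}

lemma mem_Pt3 {x : Fin 9 → ℝ} : x ∈ Pt3 ↔ x 1 ≠ 0 ∧ x 4 ≠ 0 ∧ x 8 ≠ 0 := by
  constructor
  · rintro ⟨-, h1, h2, h3⟩
    refine ⟨?_, ?_, ?_⟩
    · intro h; rw [h] at h1; simp at h1
    · intro h; rw [h] at h2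
      have := natDegree_linear_le (a := x 3) (b := x 2)
      simp only [map_zero, zero_mul, zero_add] at h2
      omega
    · intro h; rw [h] at h3
      have : (C (x 7) * X ^ 2 + C (x 6) * X + C (x 5)).natDegree ≤ 2 :=
        natDegree_quadratic_le
      simp only [map_zero, zero_mul, zero_add] at h3
      omega
  · rintro ⟨h1, h4, h8⟩
    refine ⟨⟨?_, ?_⟩, natDegree_linear h1, natDegree_quadratic h4, natDegree_cubic h8⟩
    · intro s t h
      have := congrArg Prod.fst h
      simp only [eval_add, eval_mul, eval_C, eval_X] at this
      have : x 1 * s = x 1 * t := by linarith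
      exact mul_left_cancel₀ h1 this
    · intro t h
      have := congrArg Prod.fst h
      simp [derivative_add, derivative_mul, derivative_C, derivative_X] at this
      exact h1 this

lemma halfspace_convex (ε : ℝ) (i : Fin 9) : Convex ℝ {z : Fin 9 → ℝ | 0 < ε * z i} := by
  refine convex_halfSpace_gt ⟨fun a b => ?_, fun c a => ?_⟩ 0
  · simp [mul_add]
  · simp [Pi.smul_apply, smul_eq_mul]; ring

lemma joinedIn_sign {s : Set (Fin 9 → ℝ)} {x y : Fin 9 → ℝ} (i : Fin 9)
    (hs : ∀ z ∈ s, z i ≠ 0) (h : JoinedIn s x y) (hx : 0 < x i) : 0 < y i := by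
  obtain ⟨γ, hγ⟩ := h
  by_contra hy
  have hyne : y i ≠ 0 := by
    have := hs y (by simpa [γ.target] using hγ 1)
    exact this
  have hy' : y i < 0 := lt_of_le_of_ne (not_lt.1 hy) hyne
  have hcont : Continuous fun t : unitInterval => γ t i :=
    (continuous_apply i).comp γ.continuous
  have hconn : IsPreconnected (Set.range fun t : unitInterval => γ t i) :=
    (isConnected_range hcont).isPreconnected
  have h0 : (0 : ℝ) ∈ Set.range fun t : unitInterval => γ t i := by
    have hxm : x i ∈ Set.range fun t : unitInterval => γ t i :=
      ⟨0, by simp [γ.source]⟩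
    have hym : y i ∈ Set.range fun t : unitInterval => γ t i :=
      ⟨1, by simp [γ.target]⟩
    exact hconn.Icc_subset hym hxm ⟨hy'.le, hx.le⟩
  obtain ⟨t, ht⟩ := h0
  exact hs (γ t) (hγ t) ht

lemma sign_iff {s : Set (Fin 9 → ℝ)} {x y : Fin 9 → ℝ} (i : Fin 9)
    (hs : ∀ z ∈ s, z i ≠ 0) (h : JoinedIn s x y) : (0 < x i ↔ 0 < y i) :=
  ⟨fun hx => joinedIn_sign i hs h hx, fun hy => joinedIn_sign i hs h.symm hy⟩

lemma sign_choice {a b : ℝ} (ha : a ≠ 0) (hb : b ≠ 0) (hab : 0 < a ↔ 0 < b) :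
    ∃ ε : ℝ, 0 < ε * a ∧ 0 < ε * b := by
  rcases lt_or_gt_of_ne ha with h | h
  · have hb0 : ¬ 0 < b := fun h0 => absurd (hab.2 h0) (not_lt.2 h.le)
    have : b < 0 := lt_of_le_of_ne (not_lt.1 hb0) hb
    exact ⟨-1, by linarith, by linarith⟩
  · exact ⟨1, by linarith, by simpa using hab.1 h⟩


/-- `P̃₃` has exactly eight path components, namely the sets
`P̃₃ₑ = {φ ∈ P̃₃ : e₁a₁ > 0, e₂b₂ > 0, e₃c₃ > 0}` for the eight sign vectors
`e ∈ {−1,1}³`: each such set is nonempty, and two points of `P̃₃` are joined by a path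
in `P̃₃` if and only if their leading coefficients `a₁ = x 1`, `b₂ = x 4`, `c₃ = x 8`
have matching signs. -/
theorem stmt_5 :
    (∀ e₁ e₂ e₃ : ℝ, (e₁ = 1 ∨ e₁ = -1) → (e₂ = 1 ∨ e₂ = -1) → (e₃ = 1 ∨ e₃ = -1) →
      ({x ∈ Pt3 | 0 < e₁ * x 1 ∧ 0 < e₂ * x 4 ∧ 0 < e₃ * x 8}).Nonempty) ∧
    ∀ x ∈ Pt3, ∀ y ∈ Pt3,
      (JoinedIn Pt3 x y ↔
        ((0 < x 1 ↔ 0 < y 1) ∧ (0 < x 4 ↔ 0 < y 4) ∧ (0 < x 8 ↔ 0 < y 8))) := by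
  constructor
  · intro e₁ e₂ e₃ h1 h2 h3
    have he1 : e₁ ≠ 0 ∧ 0 < e₁ * e₁ := by rcases h1 with rfl | rfl <;> norm_num
    have he2 : e₂ ≠ 0 ∧ 0 < e₂ * e₂ := by rcases h2 with rfl | rfl <;> norm_num
    have he3 : e₃ ≠ 0 ∧ 0 < e₃ * e₃ := by rcases h3 with rfl | rfl <;> norm_num
    refine ⟨![0, e₁, 0, 0, e₂, 0, 0, 0, e₃], mem_Pt3.2 ⟨?_, ?_, ?_⟩, ?_, ?_, ?_⟩
    · exact (show (![0, e₁, 0, 0, e₂, 0, 0, 0, e₃] : Fin 9 → ℝ) 1 = e₁ from rfl) ▸ he1.1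
    · exact (show (![0, e₁, 0, 0, e₂, 0, 0, 0, e₃] : Fin 9 → ℝ) 4 = e₂ from rfl) ▸ he2.1
    · exact (show (![0, e₁, 0, 0, e₂, 0, 0, 0, e₃] : Fin 9 → ℝ) 8 = e₃ from rfl) ▸ he3.1
    · exact (show (![0, e₁, 0, 0, e₂, 0, 0, 0, e₃] : Fin 9 → ℝ) 1 = e₁ from rfl) ▸ he1.2
    · exact (show (![0, e₁, 0, 0, e₂, 0, 0, 0, e₃] : Fin 9 → ℝ) 4 = e₂ from rfl) ▸ he2.2
    · exact (show (![0, e₁, 0, 0, e₂, 0, 0, 0, e₃] : Fin 9 → ℝ) 8 = e₃ from rfl) ▸ he3.2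
  · intro x hx y hy
    obtain ⟨hx1, hx4, hx8⟩ := mem_Pt3.1 hx
    obtain ⟨hy1, hy4, hy8⟩ := mem_Pt3.1 hy
    constructor
    · intro h
      exact ⟨sign_iff 1 (fun z hz => (mem_Pt3.1 hz).1) h,
        sign_iff 4 (fun z hz => (mem_Pt3.1 hz).2.1) h,
        sign_iff 8 (fun z hz => (mem_Pt3.1 hz).2.2) h⟩
    · rintro ⟨i1, i4, i8⟩
      obtain ⟨ε₁, ha1, hb1⟩ := sign_choice hx1 hy1 i1
      obtain ⟨ε₂, ha2, hb2⟩ := sign_choice hx4 hy4 i4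
      obtain ⟨ε₃, ha3, hb3⟩ := sign_choice hx8 hy8 i8
      have hconv : Convex ℝ ({z : Fin 9 → ℝ | 0 < ε₁ * z 1} ∩
          ({z | 0 < ε₂ * z 4} ∩ {z | 0 < ε₃ * z 8})) :=
        (halfspace_convex ε₁ 1).inter ((halfspace_convex ε₂ 4).inter (halfspace_convex ε₃ 8))
      have hj := (hconv.isPathConnected ⟨x, ha1, ha2, ha3⟩).joinedIn x ⟨ha1, ha2, ha3⟩ y ⟨hb1, hb2, hb3⟩
      refine hj.mono ?_
      rintro z ⟨z1, z4, z8⟩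
      rw [mem_Pt3]
      refine ⟨?_, ?_, ?_⟩
      · intro h0; rw [Set.mem_setOf_eq, h0, mul_zero] at z1; exact lt_irrefl 0 z1
      · intro h0; rw [Set.mem_setOf_eq, h0, mul_zero] at z4; exact lt_irrefl 0 z4
      · intro h0; rw [Set.mem_setOf_eq, h0, mul_zero] at z8; exact lt_irrefl 0 z8
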